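/- arXiv:1608.00375 — 2 statements merged into one kernel-verified Lean document; each statement's English description precedes it below -/
import Mathlib

section
/- In the deterministic Linear Threshold gadget: vertices {v†} ∪ {S₁,…,S_m} ∪ {T₁,…,T_m} ∪ {s_{j,i} : 1 ≤ j ≤ m, 1 ≤ i ≤ l} ∪ U, with edges (Sⱼ, s_{j,i}) and (s_{j,i}, Tⱼ) for all i, and (Tⱼ, uᵢ) for uᵢ ∈ Sⱼ; thresholds t_{Tⱼ} = l and t_v = 1 for all other vertices. For any A ⊆ {(v†,S₁),…,(v†,S_m)}, running the Linear Threshold cascade from seed {v†} in the graph with edge set E ∪ A activates exactly the vertices Sⱼ, s_{j,1},…,s_{j,l}, Tⱼ for those j with (v†,Sⱼ) ∈ A, together with ⋃_{(v†,Sⱼ)∈A} Sⱼ ⊆ U. In particular all of U is activated iff {Sⱼ : (v†,Sⱼ) ∈ A} is a set cover of U. -/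
namespace LTGadget

/-- Vertices of the Linear-Threshold gadget:
`v†`, the `Sⱼ`'s, the `Tⱼ`'s, the `s_{j,i}`'s and the universe elements `uᵢ`. -/
abbrev V (m l : ℕ) := Unit ⊕ Fin m ⊕ Fin m ⊕ (Fin m × Fin l) ⊕ Fin l

def src {m l : ℕ} : V m l := Sum.inl ()
def Sn {m l : ℕ} (j : Fin m) : V m l := Sum.inr (Sum.inl j)
def Tn {m l : ℕ} (j : Fin m) : V m l := Sum.inr (Sum.inr (Sum.inl j))
def sn {m l : ℕ} (j : Fin m) (i : Fin l) : V m l :=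
  Sum.inr (Sum.inr (Sum.inr (Sum.inl (j, i))))
def un {m l : ℕ} (i : Fin l) : V m l := Sum.inr (Sum.inr (Sum.inr (Sum.inr i)))

/-- In-neighbourhoods of the gadget, with the edges `(v†,Sⱼ)`, `j ∈ A`, added:
`Sⱼ` has in-neighbour `v†` iff `j ∈ A`; `s_{j,i}` has in-neighbour `Sⱼ`;
`Tⱼ` has in-neighbours `s_{j,1},…,s_{j,l}`; `uᵢ` has in-neighbours
`{Tⱼ : uᵢ ∈ Sⱼ}`. -/
def pred {m l : ℕ} (S : Fin m → Finset (Fin l)) (A : Finset (Fin m)) :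
    V m l → Finset (V m l)
  | Sum.inl _ => ∅
  | Sum.inr (Sum.inl j) => if j ∈ A then {src} else ∅
  | Sum.inr (Sum.inr (Sum.inl j)) => Finset.univ.image (fun i => sn j i)
  | Sum.inr (Sum.inr (Sum.inr (Sum.inl (j, _)))) => {Sn j}
  | Sum.inr (Sum.inr (Sum.inr (Sum.inr i))) =>
      (Finset.univ.filter (fun j => i ∈ S j)).image Tn

/-- Thresholds: `t_{Tⱼ} = l`, and `t_v = 1` for every other vertex. -/
def thr {m l : ℕ} : V m l → ℕ
  | Sum.inr (Sum.inr (Sum.inl _)) => l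
  | _ => 1

/-- One round of the deterministic Linear-Threshold cascade: a vertex becomes
active when at least `t_v` of its in-neighbours are active. -/
def step {m l : ℕ} (S : Fin m → Finset (Fin l)) (A : Finset (Fin m))
    (I : Finset (V m l)) : Finset (V m l) :=
  I ∪ Finset.univ.filter (fun v => thr v ≤ ((pred S A v) ∩ I).card)

/-- The fixed point of the cascade from seed `{v†}`. -/
def final {m l : ℕ} (S : Fin m → Finset (Fin l)) (A : Finset (Fin m)) :
    Finset (V m l) :=
  (step S A)^[Fintype.card (V m l)] {src}

/-!
Starting from `v†`, the cascade proceeds in rounds: the `Sⱼ` with `j ∈ A` fire in round 1, their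
`s_{j,i}` in round 2, the corresponding `Tⱼ` in round 3 (threshold `l` needs all of `s_{j,·}`, and
for `j ∉ A` none of them ever fires), and the `uᵢ` covered by such an `Sⱼ` in round 4; after that
nothing changes. Since the active set only grows, the cascade is stationary after `|V|` rounds, so
`final` is the set reached in round 4.
-/

open Finset Function

theorem _root_.Finset.isFixedPt_iterate_card {α : Type*} [Fintype α] {f : Finset α → Finset α}
    (hf : ∀ s, s ⊆ f s) (s : Finset α) : IsFixedPt f (f^[Fintype.card α] s) := by
  have grow (t : Finset α) (ht : ¬IsFixedPt f t) : #t < #(f t) :=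
    card_lt_card ((hf t).ssubset_of_ne (Ne.symm ht))
  have key (n : ℕ) : IsFixedPt f (f^[n] s) ∨ n ≤ #(f^[n] s) := by
    induction n with
    | zero => simp
    | succ n ih =>
      rw [iterate_succ_apply']
      by_cases h : IsFixedPt f (f^[n] s)
      · exact .inl (h.eq.symm ▸ h)
      · exact .inr ((ih.resolve_left h).trans_lt (grow _ h))
  by_contra h
  have := (key _).resolve_left h
  have := grow _ h
  have := card_le_univ (f (f^[Fintype.card α] s))
  omega

theorem _root_.Finset.card_le_card_inter_iff {α : Type*} [DecidableEq α] {s t : Finset α} :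
    #s ≤ #(s ∩ t) ↔ s ⊆ t := by
  rw [← inter_eq_left]
  exact ⟨eq_of_subset_of_card_le inter_subset_left, fun h => by rw [h]⟩

section

variable {m l : ℕ} (S : Fin m → Finset (Fin l)) (A : Finset (Fin m))

@[elab_as_elim]
theorem vertex_cases {motive : V m l → Prop} (src : motive src) (Sn : ∀ j, motive (Sn j))
    (Tn : ∀ j, motive (Tn j)) (sn : ∀ j i, motive (sn j i)) (un : ∀ i, motive (un i))
    (v : V m l) : motive v := by
  rcases v with ⟨⟩ | j | j | ⟨j, i⟩ | i
  exacts [src, Sn j, Tn j, sn j i, un i]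

theorem subset_step (I : Finset (V m l)) : I ⊆ step S A I := subset_union_left

theorem isFixedPt_final : IsFixedPt (step S A) (final S A) :=
  isFixedPt_iterate_card (subset_step S A) _

section
variable {S A} {I : Finset (V m l)}

theorem mem_step {v : V m l} : v ∈ step S A I ↔ v ∈ I ∨ thr v ≤ #(pred S A v ∩ I) := by
  simp [step]

theorem src_mem_step : src ∈ step S A I ↔ src ∈ I := by
  simp [mem_step, src, pred, thr]

theorem Sn_mem_step {j : Fin m} : Sn j ∈ step S A I ↔ Sn j ∈ I ∨ j ∈ A ∧ src ∈ I := by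
  by_cases hj : j ∈ A <;> simp [mem_step, Sn, pred, thr, hj, Finset.Nonempty]

theorem sn_mem_step {j : Fin m} {i : Fin l} : sn j i ∈ step S A I ↔ sn j i ∈ I ∨ Sn j ∈ I := by
  simp [mem_step, sn, pred, thr, Finset.Nonempty]

theorem Tn_mem_step {j : Fin m} : Tn j ∈ step S A I ↔ Tn j ∈ I ∨ ∀ i, sn j i ∈ I := by
  have hcard : #(univ.image (sn (l := l) j)) = l := by
    rw [card_image_of_injective _ (fun a b h => by simpa [sn] using h), card_univ, Fintype.card_fin]
  have hsub := card_le_card_inter_iff (s := univ.image (sn j)) (t := I)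
  rw [hcard] at hsub
  simp [mem_step, Tn, pred, thr, hsub, Finset.subset_iff]

theorem un_mem_step {i : Fin l} : un i ∈ step S A I ↔ un i ∈ I ∨ ∃ j, i ∈ S j ∧ Tn j ∈ I := by
  simp [mem_step, un, pred, thr, Finset.Nonempty]
end

def IsActiveAfter (k : ℕ) : V m l → Prop
  | Sum.inl _ => True
  | Sum.inr (Sum.inl j) => 1 ≤ k ∧ j ∈ A
  | Sum.inr (Sum.inr (Sum.inl j)) => 3 ≤ k ∧ j ∈ A
  | Sum.inr (Sum.inr (Sum.inr (Sum.inl (j, _)))) => 2 ≤ k ∧ j ∈ A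
  | Sum.inr (Sum.inr (Sum.inr (Sum.inr i))) => 4 ≤ k ∧ ∃ j ∈ A, i ∈ S j

open Classical in
noncomputable def activeAfter (k : ℕ) : Finset (V m l) := univ.filter (IsActiveAfter S A k)

theorem mem_activeAfter {k : ℕ} {v : V m l} : v ∈ activeAfter S A k ↔ IsActiveAfter S A k v := by
  simp [activeAfter]

theorem activeAfter_eq_activeAfter_four {k : ℕ} (hk : 4 ≤ k) :
    activeAfter S A k = activeAfter S A 4 := by
  ext v
  rcases v with ⟨⟩ | j | j | ⟨j, i⟩ | i <;>
    simp [mem_activeAfter, IsActiveAfter, hk, show 1 ≤ k by omega, show 2 ≤ k by omega,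
      show 3 ≤ k by omega]

theorem activeAfter_zero : activeAfter S A 0 = {src} := by
  ext v
  rcases v with ⟨⟩ | j | j | ⟨j, i⟩ | i <;> simp [mem_activeAfter, IsActiveAfter, src]

theorem step_activeAfter (hl : 1 ≤ l) (k : ℕ) :
    step S A (activeAfter S A k) = activeAfter S A (k + 1) := by
  -- for `l = 0` every `Tⱼ` would have threshold `0` and fire in round 1, whether or not `j ∈ A`
  have : Nonempty (Fin l) := ⟨⟨0, hl⟩⟩
  ext v
  cases v using vertex_cases with
  | src => rw [src_mem_step]; simp [mem_activeAfter, IsActiveAfter, src]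
  | Sn j => rw [Sn_mem_step]; simp [mem_activeAfter, IsActiveAfter, src, Sn]
  | Tn j =>
    rw [Tn_mem_step]
    by_cases hj : j ∈ A <;> simp [mem_activeAfter, IsActiveAfter, sn, Tn, hj]
    omega
  | sn j i =>
    rw [sn_mem_step]
    by_cases hj : j ∈ A <;> simp [mem_activeAfter, IsActiveAfter, sn, Sn, hj]
    omega
  | un i =>
    rw [un_mem_step]
    simp only [mem_activeAfter, IsActiveAfter, un, Tn]
    grind

theorem iterate_step_src (hl : 1 ≤ l) (k : ℕ) : (step S A)^[k] {src} = activeAfter S A k := by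
  induction k with
  | zero => exact (activeAfter_zero S A).symm
  | succ k ih => rw [iterate_succ_apply', ih, step_activeAfter S A hl]

theorem final_eq_activeAfter_four (hl : 1 ≤ l) : final S A = activeAfter S A 4 :=
  calc final S A = (step S A)^[4] (final S A) := ((isFixedPt_final S A).iterate 4).eq.symm
    _ = (step S A)^[4 + Fintype.card (V m l)] {src} := by rw [final, iterate_add_apply]
    _ = activeAfter S A 4 := by
      rw [iterate_step_src S A hl, activeAfter_eq_activeAfter_four S A (Nat.le_add_right _ _)]

theorem activeAfter_four :
    activeAfter S A 4 =
      {src} ∪ A.image Sn ∪ (A ×ˢ (Finset.univ : Finset (Fin l))).image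
          (fun p => sn p.1 p.2) ∪ A.image Tn ∪
        (Finset.univ.filter (fun i => ∃ j ∈ A, i ∈ S j)).image un := by
  ext v
  rcases v with ⟨⟩ | j | j | ⟨j, i⟩ | i <;>
    simp [mem_activeAfter, IsActiveAfter, src, Sn, sn, Tn, un]

end

theorem lt_gadget_activation_general
    {m l : ℕ} (hl : 1 ≤ l) (S : Fin m → Finset (Fin l))
    (A : Finset (Fin m)) :
    final S A =
      {src} ∪ A.image Sn ∪ (A ×ˢ (Finset.univ : Finset (Fin l))).image
          (fun p => sn p.1 p.2) ∪ A.image Tn ∪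
        (Finset.univ.filter (fun i => ∃ j ∈ A, i ∈ S j)).image un ∧
    ((Finset.univ.image (un (m := m)) ⊆ final S A) ↔
      ∀ i : Fin l, ∃ j ∈ A, i ∈ S j) := by
  have hfinal := final_eq_activeAfter_four S A hl
  refine ⟨hfinal.trans (activeAfter_four S A), ?_⟩
  simp [hfinal, Finset.subset_iff, mem_activeAfter, IsActiveAfter, un]

/-- Running the Linear-Threshold cascade from seed `{v†}` in the
gadget with added edges `{(v†,Sⱼ) : j ∈ A}` activates exactly the vertices
`Sⱼ, s_{j,1},…,s_{j,l}, Tⱼ` for `j ∈ A`, together with `⋃_{j∈A} Sⱼ ⊆ U`. In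
particular all of `U` is activated iff `{Sⱼ : j ∈ A}` is a set cover of `U`. -/
theorem lt_gadget_activation
    {m l : ℕ} (hl : 1 ≤ l) (S : Fin m → Finset (Fin l))
    (hcov : ∀ i : Fin l, ∃ j : Fin m, i ∈ S j)
    (A : Finset (Fin m)) :
    final S A =
      {src} ∪ A.image Sn ∪ (A ×ˢ (Finset.univ : Finset (Fin l))).image
          (fun p => sn p.1 p.2) ∪ A.image Tn ∪
        (Finset.univ.filter (fun i => ∃ j ∈ A, i ∈ S j)).image un ∧
    ((Finset.univ.image (un (m := m)) ⊆ final S A) ↔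
      ∀ i : Fin l, ∃ j ∈ A, i ∈ S j) :=
  lt_gadget_activation_general hl S A

end LTGadget
end

section
/- Let G' = (V',E') be an undirected graph and build G by adding vertices v†, v₁, v₂ and edges: (v†,w) for a fixed w ∈ V', (v₁,v₂), and (v,v₁) for every v ∈ N_{G'}(w). Suppose a spanning subgraph Q of G (obtained by deleting edges only) is a Hamiltonian path of G. Then the endpoints of Q are v† and v₂, and deleting v†, v₁, v₂ from Q and adding back the edge from w to the unique neighbour v' of v₁ in Q ∩ V' yields a Hamiltonian cycle of G'. -/
/-!
The vertices `v†` and `v₂` have a single neighbour each, so a Hamiltonian path of `G` cannot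
pass through them and must end at both. Oriented from `v†` to `v₂` it reads
`v†, w, …, v', v₁, v₂`, where `v'` is a `G'`-neighbour of `w` (the only other neighbour of `v₁`).
The segment from `v'` to `w` stays in `G'` and visits all of `V'`, so the edge `w v'` closes it
into a Hamiltonian cycle; this cycle is not degenerate because `|V'| ≥ 3`.
-/

/-- The augmented graph `G` of the closeness-hardness reduction: to `G'` we add
three vertices `v† = inr 0`, `v₁ = inr 1`, `v₂ = inr 2` and the edges `(v†,w)`,
`(v₁,v₂)`, and `(v,v₁)` for every neighbour `v` of `w` in `G'`. -/
def augGraph {V' : Type*} (G' : SimpleGraph V') (w : V') :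
    SimpleGraph (V' ⊕ Fin 3) :=
  SimpleGraph.fromRel (fun x y =>
    (∃ a b : V', x = Sum.inl a ∧ y = Sum.inl b ∧ G'.Adj a b) ∨
    (x = Sum.inr 0 ∧ y = Sum.inl w) ∨
    (x = Sum.inr 1 ∧ y = Sum.inr 2) ∨
    (∃ a : V', G'.Adj a w ∧ x = Sum.inl a ∧ y = Sum.inr 1))

open SimpleGraph Walk Sum

namespace SimpleGraph.Walk

variable {V W : Type*} {G : SimpleGraph V} {H : SimpleGraph W}

lemma IsPath.eq_or_eq_of_neighborSet_subsingleton {x y u : V} {p : G.Walk x y} (hp : p.IsPath)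
    (hu : u ∈ p.support) (hN : (G.neighborSet u).Subsingleton) : u = x ∨ u = y := by
  induction p with
  | nil => simpa using hu
  | @cons x c y hxc q ih =>
    rw [cons_isPath_iff] at hp
    rcases (mem_support_iff _).mp hu with rfl | hu
    · exact .inl rfl
    rcases ih hp.1 hu with rfl | rfl
    · -- if `u = c` is interior, its path-neighbours `x` and `z` coincide, so `x` recurs in `q`
      refine .inr (by_contra fun hy => hp.2 ?_)
      obtain ⟨z, hcz, q', rfl⟩ := q.not_nil_iff.mp (not_nil_of_ne hy)
      rw [hN (G.mem_neighborSet _ _ |>.mpr hxc.symm) hcz]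
      simp
    · exact .inr rfl

lemma IsHamiltonian.reverse [DecidableEq V] {x y : V} {p : G.Walk x y} (hp : p.IsHamiltonian) :
    p.reverse.IsHamiltonian := by
  simpa [IsHamiltonian] using hp

lemma IsHamiltonian.isHamiltonianCycle_cons [Fintype V] [DecidableEq V] {u v : V}
    {p : G.Walk u v} (hp : p.IsHamiltonian) (h : G.Adj v u) (hV : 3 ≤ Fintype.card V) :
    (cons h p).IsHamiltonianCycle := by
  have hlen := hp.length_eq
  refine isHamiltonianCycle_iff_isCycle_and_length_eq.mpr ⟨?_, by simp; omega⟩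
  refine (cons_isCycle_iff p h).mpr ⟨hp.isPath, fun he => ?_⟩
  have := hp.isPath.length_eq_one_of_mem_edges (Sym2.eq_swap ▸ he)
  omega

lemma exists_support_map_eq_of_support_subset_range (f : G ↪g H) {u t : W} (s : H.Walk u t)
    (hs : ∀ v ∈ s.support, v ∈ Set.range f) {a : V} (ha : f a = u) :
    ∃ b, f b = t ∧ ∃ q : G.Walk a b, q.support.map f = s.support := by
  induction s generalizing a with
  | nil => exact ⟨a, ha, nil, by simp [ha]⟩
  | @cons _ c _ h s ih =>
    subst ha
    obtain ⟨c, rfl⟩ := hs c (by simp)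
    obtain ⟨b, hb, q, hq⟩ := ih (fun v hv => hs v (by simp [hv])) rfl
    exact ⟨b, hb, cons (f.map_adj_iff.mp h) q, by simp [hq]⟩

end SimpleGraph.Walk

section augGraph

variable {V' : Type*} {G' : SimpleGraph V'} {w : V'}

lemma augGraph_adj_inl_inl {a b : V'} : (augGraph G' w).Adj (inl a) (inl b) ↔ G'.Adj a b := by
  simp only [augGraph, fromRel_adj]
  grind [SimpleGraph.adj_comm, SimpleGraph.Adj.ne]

lemma augGraph_adj_inr_zero {z} : (augGraph G' w).Adj (inr 0) z ↔ z = inl w := by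
  cases z <;> simp [augGraph]

lemma augGraph_adj_inr_one {z} :
    (augGraph G' w).Adj (inr 1) z ↔ z = inr 2 ∨ ∃ a, G'.Adj a w ∧ z = inl a := by
  cases z <;> simp [augGraph]; grind

lemma augGraph_adj_inr_two {z} : (augGraph G' w).Adj (inr 2) z ↔ z = inr 1 := by
  cases z <;> simp [augGraph]; grind

variable (G' w) in
@[simps!]
def augGraphInl : G' ↪g augGraph G' w where
  toEmbedding := .inl
  map_rel_iff' := augGraph_adj_inl_inl

lemma augGraph_ends_of_isHamiltonian [DecidableEq V'] {x y : V' ⊕ Fin 3}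
    {p : (augGraph G' w).Walk x y} (hp : p.IsHamiltonian) :
    (x = inr 0 ∧ y = inr 2) ∨ (x = inr 2 ∧ y = inr 0) := by
  have h0 := hp.isPath.eq_or_eq_of_neighborSet_subsingleton (hp.mem_support (inr 0))
    fun a ha b hb => (augGraph_adj_inr_zero.mp ha).trans (augGraph_adj_inr_zero.mp hb).symm
  have h2 := hp.isPath.eq_or_eq_of_neighborSet_subsingleton (hp.mem_support (inr 2))
    fun a ha b hb => (augGraph_adj_inr_two.mp ha).trans (augGraph_adj_inr_two.mp hb).symm
  grind

lemma exists_isHamiltonian_of_augGraph [DecidableEq V']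
    {p : (augGraph G' w).Walk (inr 0) (inr 2)} (hp : p.IsHamiltonian) :
    ∃ v, G'.Adj w v ∧ ∃ t : G'.Walk v w, t.IsHamiltonian := by
  -- The path reads `v†, w, …, z, v₁, v₂`; `s` is its segment from `z` to `w`.
  obtain ⟨_, h0, q, rfl⟩ := p.not_nil_iff.mp (not_nil_of_ne (by simp))
  obtain rfl := augGraph_adj_inr_zero.mp h0
  obtain ⟨_, h2, r, hq⟩ := q.reverse.not_nil_iff.mp (not_nil_of_ne (by simp))
  obtain rfl := augGraph_adj_inr_two.mp h2
  obtain ⟨z, h1, s, rfl⟩ := r.not_nil_iff.mp (not_nil_of_ne (by simp))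
  have hsupp : (cons h0 q).support = inr 0 :: (s.support.reverse ++ [inr 1, inr 2]) := by
    rw [support_cons, ← List.reverse_reverse q.support, ← support_reverse, hq]; simp
  have hnodup := hsupp ▸ hp.isPath.support_nodup
  have hinr : ∀ i : Fin 3, inr i ∉ s.support := by
    intro i hi
    fin_cases i <;> grind [List.nodup_cons, List.nodup_append]
  have hinl : ∀ a, inl a ∈ s.support := fun a => by simpa [hsupp] using hp.mem_support (inl a)
  obtain ⟨v, hv, rfl⟩ : ∃ v, G'.Adj v w ∧ z = inl v :=
    (augGraph_adj_inr_one.mp h1).resolve_left (by rintro rfl; exact hinr 2 s.start_mem_support)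
  obtain ⟨b, hb, t, ht⟩ := exists_support_map_eq_of_support_subset_range (augGraphInl G' w) s
    (fun u hu => by cases u with | inl a => exact ⟨a, rfl⟩ | inr i => exact absurd hu (hinr i)) rfl
  obtain rfl : b = w := inl_injective hb
  refine ⟨v, hv.symm, t, IsPath.isHamiltonian_of_mem ?_ fun a => ?_⟩
  · have hsnodup : s.support.Nodup := by grind [List.nodup_cons, List.nodup_append]
    exact IsPath.mk' <| (List.nodup_map_iff inl_injective).mp (ht ▸ hsnodup)
  · simpa [← ht] using hinl a

end augGraph

theorem ham_path_aug_to_ham_cycle_general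
    {V' : Type*} [Fintype V'] [DecidableEq V'] (G' : SimpleGraph V') (w : V') (hV' : 3 ≤ Fintype.card V')
    (x y : V' ⊕ Fin 3) (p : (augGraph G' w).Walk x y)
    (hham : p.IsHamiltonian) :
    ((x = Sum.inr 0 ∧ y = Sum.inr 2) ∨ (x = Sum.inr 2 ∧ y = Sum.inr 0)) ∧
    ∃ (v : V') (c : G'.Walk v v), c.IsHamiltonianCycle := by
  have hends := augGraph_ends_of_isHamiltonian hham
  refine ⟨hends, ?_⟩
  obtain ⟨v, hwv, t, ht⟩ : ∃ v, G'.Adj w v ∧ ∃ t : G'.Walk v w, t.IsHamiltonian := by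
    rcases hends with ⟨rfl, rfl⟩ | ⟨rfl, rfl⟩
    exacts [exists_isHamiltonian_of_augGraph hham, exists_isHamiltonian_of_augGraph hham.reverse]
  exact ⟨w, cons hwv t, ht.isHamiltonianCycle_cons hwv hV'⟩

/-- If a Hamiltonian path of the augmented graph `G` exists (a
spanning subgraph of `G` obtained by deleting edges that is a path through all
vertices), then its endpoints are `v†` and `v₂`, and `G'` has a Hamiltonian
cycle (obtained by deleting `v†,v₁,v₂` from the path and closing the remaining
segment from `w` to the unique `G'`-neighbour `v'` of `v₁` on the path with the
edge `(v',w)`). -/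
theorem ham_path_aug_to_ham_cycle
    {V' : Type*} [Fintype V'] [DecidableEq V'] (G' : SimpleGraph V') (w : V') (hV' : 3 ≤ Fintype.card V')
    (x y : V' ⊕ Fin 3) (p : (augGraph G' w).Walk x y)
    (hp : p.IsPath) (hham : p.IsHamiltonian) :
    ((x = Sum.inr 0 ∧ y = Sum.inr 2) ∨ (x = Sum.inr 2 ∧ y = Sum.inr 0)) ∧
    ∃ (v : V') (c : G'.Walk v v), c.IsHamiltonianCycle :=
  ham_path_aug_to_ham_cycle_general G' w hV' x y p hham
end
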